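/- arXiv:1903.12151 — 6 statements merged into one kernel-verified Lean document; each statement's English description precedes it below -/
import Mathlib

section
/- Let E be a finite connected subset of Z^d with discrete boundary ∂E = {z ∈ Z^d \ E : dist(z,x)=1 for some x ∈ E}, and let Ē = E ∪ ∂E. For a function u : Ē → R, define the subdifferential ∂u(x;E) = {p ∈ R^d : u(x) - p·x ≤ u(y) - p·y for all y ∈ Ē} and ∂u(E) = ∪_{x∈E} ∂u(x;E). Then there is a constant C depending only on d such that min_{∂E} u ≤ min_E u + C · diam(Ē) · |∂u(E)|^{1/d}, where |·| denotes Lebesgue measure and diam(Ē) = max{|x-y| : x,y ∈ Ē}. -/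
open MeasureTheory Finset
open scoped Classical

/-- Two lattice points are nearest neighbors. -/
def latAdj {d : ℕ} (x y : Fin d → ℤ) : Prop := (∑ i, |x i - y i|) = 1

/-- The set of the `2d` nearest neighbors of a lattice point. -/
def latNbrs {d : ℕ} (x : Fin d → ℤ) : Finset (Fin d → ℤ) :=
  Finset.image
    (fun js : Fin d × Bool => fun i => x i + (if i = js.1 then (if js.2 then 1 else -1) else 0))
    Finset.univ

/-- The discrete boundary of a finite set `E ⊂ ℤ^d`. -/
def latBd {d : ℕ} (E : Finset (Fin d → ℤ)) : Finset (Fin d → ℤ) := (E.biUnion latNbrs) \ E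

/-- The discrete closure `Ē = E ∪ ∂E`. -/
def latCl {d : ℕ} (E : Finset (Fin d → ℤ)) : Finset (Fin d → ℤ) := E ∪ latBd E

/-- Dot product of `p ∈ ℝ^d` with a lattice point. -/
def dotZ {d : ℕ} (p : Fin d → ℝ) (x : Fin d → ℤ) : ℝ := ∑ i, p i * (x i : ℝ)

/-- The subdifferential `∂u(x;E)`. -/
def subdiff {d : ℕ} (u : (Fin d → ℤ) → ℝ) (E : Finset (Fin d → ℤ)) (x : Fin d → ℤ) :
    Set (Fin d → ℝ) :=
  {p | ∀ y ∈ latCl E, u x - dotZ p x ≤ u y - dotZ p y}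

/-- The subdifferential `∂u(A;E) = ⋃_{x ∈ A} ∂u(x;E)`. -/
def subdiffU {d : ℕ} (u : (Fin d → ℤ) → ℝ) (A E : Finset (Fin d → ℤ)) : Set (Fin d → ℝ) :=
  ⋃ x ∈ A, subdiff u E x

/-- Euclidean distance between lattice points. -/
noncomputable def distZ {d : ℕ} (x y : Fin d → ℤ) : ℝ :=
  Real.sqrt (∑ i, ((x i - y i : ℤ) : ℝ) ^ 2)

/-- `E` is connected as a subgraph of the nearest-neighbor lattice. -/
def latConn {d : ℕ} (E : Finset (Fin d → ℤ)) : Prop :=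
  ∀ x ∈ E, ∀ y ∈ E, Relation.ReflTransGen (fun a b => a ∈ E ∧ b ∈ E ∧ latAdj a b) x y

/-- The Euclidean diameter of `Ē = E ∪ ∂E`. -/
noncomputable def latDiam {d : ℕ} (E : Finset (Fin d → ℤ)) : ℝ :=
  sSup {r | ∃ x ∈ latCl E, ∃ y ∈ latCl E, r = distZ x y}

section Aux
variable {d : ℕ}

lemma shift_mem_latNbrs (x : Fin d → ℤ) (i : Fin d) (b : Bool) :
    (fun j => x j + if j = i then (if b then 1 else -1) else 0) ∈ latNbrs x :=
  Finset.mem_image.mpr ⟨(i, b), Finset.mem_univ _, rfl⟩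

lemma latNbrs_subset_latCl {E : Finset (Fin d → ℤ)} {x : Fin d → ℤ} (hx : x ∈ E)
    {y : Fin d → ℤ} (hy : y ∈ latNbrs x) : y ∈ latCl E := by
  by_cases h : y ∈ E
  · exact Finset.mem_union_left _ h
  · exact Finset.mem_union_right _ (Finset.mem_sdiff.mpr ⟨Finset.mem_biUnion.mpr ⟨x, hx, hy⟩, h⟩)

lemma dotZ_shift (p : Fin d → ℝ) (x : Fin d → ℤ) (i : Fin d) (c : ℤ) :
    dotZ p (fun j => x j + if j = i then c else 0) = dotZ p x + p i * c := by
  have h : ∀ j, p j * (((x j + if j = i then c else 0 : ℤ)) : ℝ)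
      = p j * (x j : ℝ) + (if j = i then p j * (c : ℝ) else 0) := by
    intro j
    by_cases hj : j = i
    · subst hj; simp only [if_pos rfl]; push_cast; ring
    · simp [hj]
  simp only [dotZ, h, Finset.sum_add_distrib, Finset.sum_ite_eq', Finset.mem_univ, if_true]

lemma latBd_nonempty (hd : 0 < d) {E : Finset (Fin d → ℤ)} (hE : E.Nonempty) :
    (latBd E).Nonempty := by
  obtain ⟨x, hx, hmax⟩ := E.exists_max_image (fun v => v ⟨0, hd⟩) hE
  set i : Fin d := ⟨0, hd⟩
  refine ⟨fun j => x j + if j = i then 1 else 0, Finset.mem_sdiff.mpr ⟨?_, ?_⟩⟩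
  · refine Finset.mem_biUnion.mpr ⟨x, hx, ?_⟩
    have := shift_mem_latNbrs x i true
    simpa using this
  · intro hmem
    have h2 := hmax _ hmem
    simp at h2

lemma distZ_nonneg (x y : Fin d → ℤ) : 0 ≤ distZ x y := Real.sqrt_nonneg _

lemma coord_le_distZ (x y : Fin d → ℤ) (i : Fin d) : |((x i - y i : ℤ) : ℝ)| ≤ distZ x y := by
  rw [← Real.sqrt_sq_eq_abs]
  exact Real.sqrt_le_sqrt (Finset.single_le_sum (f := fun j => ((x j - y j : ℤ) : ℝ) ^ 2)
    (fun j _ => sq_nonneg _) (Finset.mem_univ i))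

lemma bddAbove_distSet (E : Finset (Fin d → ℤ)) :
    BddAbove {r | ∃ x ∈ latCl E, ∃ y ∈ latCl E, r = distZ x y} := by
  have hsub : {r | ∃ x ∈ latCl E, ∃ y ∈ latCl E, r = distZ x y} ⊆
      ↑(((latCl E) ×ˢ (latCl E)).image fun q => distZ q.1 q.2) := by
    rintro r ⟨x, hx, y, hy, rfl⟩
    exact Finset.mem_coe.mpr (Finset.mem_image.mpr ⟨(x, y), Finset.mem_product.mpr ⟨hx, hy⟩, rfl⟩)
  exact ((Finset.finite_toSet _).subset hsub).bddAbove

lemma distZ_le_latDiam {E : Finset (Fin d → ℤ)} {x y : Fin d → ℤ}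
    (hx : x ∈ latCl E) (hy : y ∈ latCl E) : distZ x y ≤ latDiam E :=
  le_csSup (bddAbove_distSet E) ⟨x, hx, y, hy, rfl⟩

lemma one_le_latDiam (hd : 0 < d) {E : Finset (Fin d → ℤ)} (hE : E.Nonempty) :
    1 ≤ latDiam E := by
  obtain ⟨x, hx⟩ := hE
  set i : Fin d := ⟨0, hd⟩
  set y : Fin d → ℤ := fun j => x j + if j = i then 1 else 0 with hy_def
  have hy : y ∈ latCl E := latNbrs_subset_latCl hx (by simpa using shift_mem_latNbrs x i true)
  have hxc : x ∈ latCl E := Finset.mem_union_left _ hx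
  have hdist : distZ y x = 1 := by
    have h1 : ∀ j, ((y j - x j : ℤ) : ℝ) ^ 2 = if j = i then 1 else 0 := by
      intro j; by_cases h : j = i <;> simp [hy_def, h]
    rw [distZ, show (∑ j, ((y j - x j : ℤ) : ℝ) ^ 2) = ∑ j, if j = i then (1:ℝ) else 0 from
      Finset.sum_congr rfl fun j _ => h1 j]
    simp
  calc (1:ℝ) = distZ y x := hdist.symm
    _ ≤ latDiam E := distZ_le_latDiam hy hxc

lemma subdiff_subset_Icc (u : (Fin d → ℤ) → ℝ) (E : Finset (Fin d → ℤ)) {x : Fin d → ℤ}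
    (hx : x ∈ E) :
    subdiff u E x ⊆ Set.Icc
      (fun i => u x - u (fun j => x j + if j = i then -1 else 0))
      (fun i => u (fun j => x j + if j = i then 1 else 0) - u x) := by
  intro p hp
  refine ⟨fun i => ?_, fun i => ?_⟩
  · have hy := latNbrs_subset_latCl hx (by simpa using shift_mem_latNbrs x i false)
    have h := hp _ hy
    rw [dotZ_shift] at h
    push_cast at h
    dsimp only
    linarith
  · have hy := latNbrs_subset_latCl hx (by simpa using shift_mem_latNbrs x i true)
    have h := hp _ hy
    rw [dotZ_shift] at h
    push_cast at h
    dsimp only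
    linarith

lemma subdiffU_volume_lt_top (u : (Fin d → ℤ) → ℝ) (E : Finset (Fin d → ℤ)) :
    volume (subdiffU u E E) < ⊤ := by
  have h1 : volume (subdiffU u E E) ≤ ∑ x ∈ E, volume (subdiff u E x) :=
    measure_biUnion_finset_le _ _
  refine lt_of_le_of_lt h1 (ENNReal.sum_lt_top.mpr fun x hx => ?_)
  exact lt_of_le_of_lt (measure_mono (subdiff_subset_Icc u E hx))
    isCompact_Icc.measure_lt_top

end Aux

/-- Discrete Alexandrov–Bakelman–Pucci estimate:
`min_{∂E} u ≤ min_E u + C · diam(Ē) · |∂u(E)|^{1/d}`. -/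
theorem discrete_ABP (d : ℕ) (hd : 0 < d) :
    ∃ C : ℝ, 0 < C ∧ ∀ (E : Finset (Fin d → ℤ)) (hE : E.Nonempty), latConn E →
      ∀ u : (Fin d → ℤ) → ℝ,
        ∃ z ∈ latBd E, u z ≤ E.inf' hE u +
          C * latDiam E * (volume (subdiffU u E E)).toReal ^ ((1 : ℝ) / d) := by
  refine ⟨d, by exact_mod_cast hd, ?_⟩
  intro E hE _ u
  obtain ⟨z, hz, hzmin⟩ := Finset.exists_min_image (latBd E) u (latBd_nonempty hd hE)
  refine ⟨z, hz, ?_⟩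
  set S := subdiffU u E E with hS
  set X := (volume S).toReal ^ ((1 : ℝ) / d) with hX_def
  have hdpos : (0:ℝ) < d := by exact_mod_cast hd
  have hdiam1 : 1 ≤ latDiam E := one_le_latDiam hd hE
  have hdiam0 : 0 < latDiam E := lt_of_lt_of_le one_pos hdiam1
  have hX0 : 0 ≤ X := Real.rpow_nonneg ENNReal.toReal_nonneg _
  set mE := E.inf' hE u with hmE
  by_cases hM : u z ≤ mE
  · have : 0 ≤ (d:ℝ) * latDiam E * X := by positivity
    linarith
  push_neg at hM
  set M := u z - mE with hMdef
  have hMpos : 0 < M := sub_pos.mpr hM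
  set r := M / (d * latDiam E) with hr_def
  have hr0 : 0 < r := by positivity
  have hball : Metric.ball (0 : Fin d → ℝ) r ⊆ S := by
    intro p hp
    rw [Metric.mem_ball, dist_zero_right] at hp
    have hpbound : ∀ a ∈ latCl E, ∀ b ∈ latCl E, dotZ p a - dotZ p b < M := by
      intro a ha b hb
      have h1 : dotZ p a - dotZ p b ≤ ∑ _i : Fin d, ‖p‖ * distZ a b := by
        have he : dotZ p a - dotZ p b = ∑ i, p i * ((a i - b i : ℤ) : ℝ) := by
          rw [dotZ, dotZ, ← Finset.sum_sub_distrib]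
          refine Finset.sum_congr rfl fun i _ => ?_
          push_cast; ring
        rw [he]
        refine Finset.sum_le_sum fun i _ => ?_
        calc p i * ((a i - b i : ℤ) : ℝ) ≤ |p i * ((a i - b i : ℤ) : ℝ)| := le_abs_self _
          _ = |p i| * |((a i - b i : ℤ) : ℝ)| := abs_mul _ _
          _ ≤ ‖p‖ * distZ a b := by
              refine mul_le_mul ?_ (coord_le_distZ a b i) (abs_nonneg _) (norm_nonneg _)
              simpa [Real.norm_eq_abs] using norm_le_pi_norm p i
      have h2 : (∑ _i : Fin d, ‖p‖ * distZ a b) = d * (‖p‖ * distZ a b) := by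
        rw [Finset.sum_const, Finset.card_univ, Fintype.card_fin, nsmul_eq_mul]
      have h3 : distZ a b ≤ latDiam E := distZ_le_latDiam ha hb
      have h4 : ‖p‖ * distZ a b ≤ ‖p‖ * latDiam E :=
        mul_le_mul_of_nonneg_left h3 (norm_nonneg _)
      have h5 : (d:ℝ) * (‖p‖ * latDiam E) < d * (r * latDiam E) :=
        mul_lt_mul_of_pos_left (mul_lt_mul_of_pos_right hp hdiam0) hdpos
      have h6 : (d:ℝ) * (r * latDiam E) = M := by
        rw [hr_def]; field_simp
      nlinarith [norm_nonneg p]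
    obtain ⟨xm, hxm, hmin⟩ := Finset.exists_min_image (latCl E) (fun y => u y - dotZ p y)
      ⟨hE.choose, Finset.mem_union_left _ hE.choose_spec⟩
    have hxmE : xm ∈ E := by
      rcases Finset.mem_union.mp hxm with h | h
      · exact h
      · exfalso
        obtain ⟨x0, hx0, hx0min⟩ := Finset.exists_mem_eq_inf' hE u
        have hx0cl : x0 ∈ latCl E := Finset.mem_union_left _ hx0
        have hA := hmin x0 hx0cl
        have hB : u z ≤ u xm := hzmin xm h
        have hC := hpbound xm hxm x0 hx0cl
        have hux0 : u x0 = mE := hx0min.symm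
        linarith
    exact Set.mem_iUnion₂.mpr ⟨xm, hxmE, fun y hy => hmin y hy⟩
  have hfin : volume S ≠ ⊤ := (subdiffU_volume_lt_top u E).ne
  have hvol : ENNReal.ofReal ((2 * r) ^ d) ≤ volume S := by
    have h : volume (Metric.ball (0 : Fin d → ℝ) r) ≤ volume S := measure_mono hball
    rwa [Real.volume_pi_ball _ hr0, Fintype.card_fin] at h
  have htr : (2*r)^d ≤ (volume S).toReal := (ENNReal.ofReal_le_iff_le_toReal hfin).mp hvol
  have hXge : 2*r ≤ X := by
    have h0 : (0:ℝ) ≤ 2*r := by positivity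
    calc 2*r = ((2*r)^d) ^ ((1:ℝ)/d) := by
          rw [← Real.rpow_natCast (2*r) d, ← Real.rpow_mul h0, mul_one_div,
            div_self (ne_of_gt hdpos), Real.rpow_one]
      _ ≤ X := Real.rpow_le_rpow (by positivity) htr (by positivity)
  have hfinal : (d:ℝ) * latDiam E * (2*r) ≤ (d:ℝ) * latDiam E * X :=
    mul_le_mul_of_nonneg_left hXge (by positivity)
  have heq : (d:ℝ) * latDiam E * (2*r) = 2*M := by
    rw [hr_def]; field_simp
  linarith
end

section
/- Let ω(x) = diag[ω₁(x),...,ω_d(x)] be positive-definite diagonal matrices with ω(x,x±e_i) := ω_i(x)/(2 tr ω(x)) ≥ κ > 0 for all i, and define L_ω u(x) = Σ_{|e|=1} ω(x,x+e)[u(x+e)-u(x)]. Let B ⊂ Z^d be finite and u : B̄ → R. For any x ∈ B with ∂u(x;B) ≠ ∅, the Lebesgue measure of the subdifferential satisfies |∂u(x;B)| ≤ (2 L_ω u(x)/κ)_+^d. -/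
open MeasureTheory Finset
open scoped Classical

/-- Trace of the diagonal environment matrix at `x`. -/
def trw {d : ℕ} (ω : (Fin d → ℤ) → Fin d → ℝ) (x : Fin d → ℤ) : ℝ := ∑ i, ω x i

/-- The balanced discrete elliptic operator
`L_ω u(x) = ∑_i ω_i(x)/(2 tr ω(x)) · (u(x+e_i)+u(x-e_i)-2u(x))`. -/
noncomputable def Lop {d : ℕ} (ω : (Fin d → ℤ) → Fin d → ℝ) (u : (Fin d → ℤ) → ℝ)
    (x : Fin d → ℤ) : ℝ :=
  ∑ i, (ω x i / (2 * trw ω x)) * (u (x + Pi.single i 1) + u (x - Pi.single i 1) - 2 * u x)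

/-- Pointwise upper bound on the Lebesgue measure of the subdifferential:
`|∂u(x;B)| ≤ (2 L_ω u(x)/κ)_+^d` whenever `∂u(x;B) ≠ ∅`. -/
theorem subdiff_pointwise_upper_bound (d : ℕ) (hd : 0 < d)
    (ω : (Fin d → ℤ) → Fin d → ℝ) (hpos : ∀ x i, 0 < ω x i)
    (κ : ℝ) (hκ : 0 < κ) (hell : ∀ x i, κ ≤ ω x i / (2 * trw ω x))
    (B : Finset (Fin d → ℤ)) (u : (Fin d → ℤ) → ℝ)
    (x : Fin d → ℤ) (hx : x ∈ B) (hne : (subdiff u B x).Nonempty) :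
    volume (subdiff u B x) ≤ ENNReal.ofReal ((max (2 * Lop ω u x / κ) 0) ^ d) := by

  obtain ⟨p0, hp0⟩ := hne
  -- neighbors are in the closure
  have hnbrp : ∀ i : Fin d, (x + Pi.single i 1) ∈ latNbrs x := by
    intro i
    refine Finset.mem_image.2 ⟨(i, true), Finset.mem_univ _, ?_⟩
    funext k; by_cases h : k = i <;> simp [Pi.single_apply, h]
  have hnbrm : ∀ i : Fin d, (x - Pi.single i 1) ∈ latNbrs x := by
    intro i
    refine Finset.mem_image.2 ⟨(i, false), Finset.mem_univ _, ?_⟩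
    funext k; by_cases h : k = i <;> simp [Pi.single_apply, h, sub_eq_add_neg]
  have hcl : ∀ y ∈ latNbrs x, y ∈ latCl B := by
    intro y hy
    by_cases h : y ∈ B
    · exact Finset.mem_union_left _ h
    · exact Finset.mem_union_right _
        (Finset.mem_sdiff.2 ⟨Finset.mem_biUnion.2 ⟨x, hx, hy⟩, h⟩)
  have hdotp : ∀ (q : Fin d → ℝ) (i : Fin d),
      dotZ q (x + Pi.single i 1) = dotZ q x + q i := by
    intro q i
    simp only [dotZ, Pi.add_apply, Pi.single_apply]
    push_cast
    simp [mul_add, Finset.sum_add_distrib, mul_ite, mul_one, mul_zero,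
      Finset.sum_ite_eq']
  have hdotm : ∀ (q : Fin d → ℝ) (i : Fin d),
      dotZ q (x - Pi.single i 1) = dotZ q x - q i := by
    intro q i
    simp only [dotZ, Pi.sub_apply, Pi.single_apply]
    push_cast
    simp [mul_sub, Finset.sum_sub_distrib, mul_ite, mul_one, mul_zero,
      Finset.sum_ite_eq']
  -- coordinate bounds for any element of the subdifferential
  set a : Fin d → ℝ := fun i => u x - u (x - Pi.single i 1) with ha
  set b : Fin d → ℝ := fun i => u (x + Pi.single i 1) - u x with hb
  have hbound : ∀ q ∈ subdiff u B x, ∀ i, q i ∈ Set.Icc (a i) (b i) := by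
    intro q hq i
    have h1 := hq _ (hcl _ (hnbrp i))
    have h2 := hq _ (hcl _ (hnbrm i))
    rw [hdotp q i] at h1
    rw [hdotm q i] at h2
    constructor
    · simp only [ha]; linarith
    · simp only [hb]; linarith
  have hab : ∀ i, a i ≤ b i := fun i =>
    le_trans (hbound p0 hp0 i).1 (hbound p0 hp0 i).2
  have hsub : subdiff u B x ⊆ Set.univ.pi (fun i => Set.Icc (a i) (b i)) := by
    intro q hq
    intro i _
    exact hbound q hq i
  set M : ℝ := max (2 * Lop ω u x / κ) 0 with hM
  have hM0 : 0 ≤ M := le_max_right _ _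
  have hs0 : ∀ i, 0 ≤ b i - a i := fun i => sub_nonneg.2 (hab i)
  have hLop : Lop ω u x = ∑ i, (ω x i / (2 * trw ω x)) * (b i - a i) := by
    unfold Lop
    congr 1; funext i
    simp only [ha, hb]; ring_nf
  have hterm : ∀ i, 0 ≤ (ω x i / (2 * trw ω x)) * (b i - a i) := fun i =>
    mul_nonneg (le_trans hκ.le (hell x i)) (hs0 i)
  have hLpos : 0 ≤ Lop ω u x := by
    rw [hLop]; exact Finset.sum_nonneg fun i _ => hterm i
  have hsM : ∀ i, b i - a i ≤ M := by
    intro i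
    have h1 : κ * (b i - a i) ≤ (ω x i / (2 * trw ω x)) * (b i - a i) :=
      mul_le_mul_of_nonneg_right (hell x i) (hs0 i)
    have h2 : (ω x i / (2 * trw ω x)) * (b i - a i) ≤ Lop ω u x := by
      rw [hLop]
      exact Finset.single_le_sum (fun j _ => hterm j) (Finset.mem_univ i)
    have h3 : b i - a i ≤ Lop ω u x / κ := by
      rw [le_div_iff₀ hκ, mul_comm]; exact le_trans h1 h2
    have h4 : Lop ω u x / κ ≤ 2 * Lop ω u x / κ := by
      exact (div_le_div_iff_of_pos_right hκ).2 (by linarith)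
    exact le_trans (le_trans h3 h4) (le_max_left _ _)
  calc volume (subdiff u B x)
      ≤ volume (Set.univ.pi fun i => Set.Icc (a i) (b i)) := measure_mono hsub
    _ = ∏ i, ENNReal.ofReal (b i - a i) := by
        rw [volume_pi_pi]
        simp [Real.volume_Icc]
    _ ≤ ∏ _i : Fin d, ENNReal.ofReal M :=
        Finset.prod_le_prod' fun i _ => ENNReal.ofReal_le_ofReal (hsM i)
    _ = ENNReal.ofReal (M ^ d) := by
        rw [Finset.prod_const, Finset.card_univ, Fintype.card_fin,
          ← ENNReal.ofReal_pow hM0]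
end

section
/- Under the hypotheses of the upper subdifferential bound (uniformly elliptic balanced operator L_ω with ellipticity constant κ), if L_ω u(x) ≤ ℓ/2 for all x ∈ B, then |∂u(B)| ≤ (ℓ_+/κ)^d · #B, where #B is the cardinality of B and |∂u(B)| is the Lebesgue measure of ∪_{x∈B} ∂u(x;B). -/
open MeasureTheory Finset
open scoped Classical

lemma dotZ_add_single {d : ℕ} (p : Fin d → ℝ) (x : Fin d → ℤ) (i : Fin d) (c : ℤ) :
    dotZ p (x + Pi.single i c) = dotZ p x + p i * c := by
  have h : ∀ j : Fin d, p j * (((x + Pi.single i c : Fin d → ℤ) j : ℤ) : ℝ)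
      = p j * (x j : ℝ) + (if j = i then p j * (c:ℝ) else 0) := by
    intro j
    simp only [Pi.add_apply, Pi.single_apply]
    push_cast
    split <;> ring
  unfold dotZ
  rw [Finset.sum_congr rfl fun j _ => h j, Finset.sum_add_distrib,
      Finset.sum_ite_eq' Finset.univ i]
  simp

lemma sub_single_eq_add' {d : ℕ} (x : Fin d → ℤ) (i : Fin d) :
    x - Pi.single i 1 = x + Pi.single i (-1) := by
  funext j
  simp [Pi.single_apply]
  split <;> ring

lemma dotZ_sub_single {d : ℕ} (p : Fin d → ℝ) (x : Fin d → ℤ) (i : Fin d) :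
    dotZ p (x - Pi.single i 1) = dotZ p x - p i := by
  rw [sub_single_eq_add', dotZ_add_single]
  push_cast
  ring

lemma add_single_mem_latCl {d : ℕ} {B : Finset (Fin d → ℤ)} {x : Fin d → ℤ} (hx : x ∈ B)
    (i : Fin d) (b : Bool) :
    (x + Pi.single i (if b then 1 else -1)) ∈ latCl B := by
  have hn : (x + Pi.single i (if b then 1 else -1)) ∈ latNbrs x := by
    rw [latNbrs, Finset.mem_image]
    refine ⟨(i, b), Finset.mem_univ _, ?_⟩
    funext j
    simp [Pi.single_apply]
  by_cases hmem : (x + Pi.single i (if b then 1 else -1)) ∈ B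
  · exact Finset.mem_union_left _ hmem
  · refine Finset.mem_union_right _ ?_
    rw [latBd, Finset.mem_sdiff]
    exact ⟨Finset.mem_biUnion.2 ⟨x, hx, hn⟩, hmem⟩

lemma subdiff_vol_bound {d : ℕ}
    (ω : (Fin d → ℤ) → Fin d → ℝ) (hpos : ∀ x i, 0 < ω x i)
    (κ : ℝ) (hκ : 0 < κ) (hell : ∀ x i, κ ≤ ω x i / (2 * trw ω x))
    (B : Finset (Fin d → ℤ)) (u : (Fin d → ℤ) → ℝ) (ℓ : ℝ)
    {x : Fin d → ℤ} (hx : x ∈ B) (hL : Lop ω u x ≤ ℓ / 2) :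
    volume (subdiff u B x) ≤ ENNReal.ofReal ((max ℓ 0 / κ) ^ d) := by
  rcases Set.eq_empty_or_nonempty (subdiff u B x) with he | ⟨p, hp⟩
  · simp [he]
  set f : Fin d → ℝ := fun i => u (x + Pi.single i 1) - u x with hf
  set g : Fin d → ℝ := fun i => u x - u (x - Pi.single i 1) with hg
  -- key facts for any q in the subdifferential
  have key : ∀ q ∈ subdiff u B x, ∀ i, g i ≤ q i ∧ q i ≤ f i := by
    intro q hq i
    constructor
    · have h1 := hq (x - Pi.single i 1) (by
        rw [sub_single_eq_add']
        simpa using add_single_mem_latCl hx i false)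
      rw [dotZ_sub_single] at h1
      simp only [hg]
      linarith
    · have h1 := hq (x + Pi.single i 1) (by simpa using add_single_mem_latCl hx i true)
      rw [dotZ_add_single] at h1
      simp only [hf]
      push_cast at h1
      linarith
  have hD : ∀ i, 0 ≤ f i - g i := by
    intro i
    have := key p hp i
    linarith [this.1, this.2]
  -- Lop rewrite
  have hLop : Lop ω u x = ∑ i, (ω x i / (2 * trw ω x)) * (f i - g i) := by
    unfold Lop
    refine Finset.sum_congr rfl fun i _ => ?_
    show _ = (ω x i / (2 * trw ω x)) *
      ((u (x + Pi.single i 1) - u x) - (u x - u (x - Pi.single i 1)))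
    ring
  -- each side length bounded
  have hside : ∀ i, f i - g i ≤ max ℓ 0 / κ := by
    intro i
    have hterm : (ω x i / (2 * trw ω x)) * (f i - g i) ≤ ℓ / 2 := by
      rw [hLop] at hL
      refine le_trans (Finset.single_le_sum (f := fun j => (ω x j / (2 * trw ω x)) * (f j - g j))
        (fun j _ => mul_nonneg (le_trans hκ.le (hell x j)) (hD j)) (Finset.mem_univ i)) hL
    have hκD : κ * (f i - g i) ≤ max ℓ 0 := by
      have h2 : κ * (f i - g i) ≤ (ω x i / (2 * trw ω x)) * (f i - g i) :=
        mul_le_mul_of_nonneg_right (hell x i) (hD i)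
      have h3 : ℓ / 2 ≤ max ℓ 0 := by
        rcases le_total ℓ 0 with h | h
        · exact le_trans (by linarith) (le_max_right _ _)
        · exact le_trans (by linarith) (le_max_left _ _)
      exact le_trans h2 (le_trans hterm h3)
    rw [le_div_iff₀ hκ]
    linarith [hκD]
  -- subdiff contained in the box
  have hsub : subdiff u B x ⊆ Set.pi Set.univ (fun i => Set.Icc (g i) (f i)) := by
    intro q hq i _
    exact ⟨(key q hq i).1, (key q hq i).2⟩
  calc volume (subdiff u B x)
      ≤ volume (Set.pi Set.univ (fun i => Set.Icc (g i) (f i))) := measure_mono hsub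
    _ = ∏ i, volume (Set.Icc (g i) (f i)) := volume_pi_pi _
    _ = ∏ i, ENNReal.ofReal (f i - g i) := by
        simp [Real.volume_Icc]
    _ ≤ ∏ i : Fin d, ENNReal.ofReal (max ℓ 0 / κ) :=
        Finset.prod_le_prod' fun i _ => ENNReal.ofReal_le_ofReal (hside i)
    _ = ENNReal.ofReal ((max ℓ 0 / κ) ^ d) := by
        rw [Finset.prod_const, Finset.card_univ, Fintype.card_fin,
          ENNReal.ofReal_pow (div_nonneg (le_max_right _ _) hκ.le)]
/-- If `L_ω u(x) ≤ ℓ/2` on `B`, then `|∂u(B)| ≤ (ℓ_+/κ)^d · #B`. -/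
theorem subdiff_global_upper_bound (d : ℕ) (hd : 0 < d)
    (ω : (Fin d → ℤ) → Fin d → ℝ) (hpos : ∀ x i, 0 < ω x i)
    (κ : ℝ) (hκ : 0 < κ) (hell : ∀ x i, κ ≤ ω x i / (2 * trw ω x))
    (B : Finset (Fin d → ℤ)) (u : (Fin d → ℤ) → ℝ) (ℓ : ℝ)
    (hsup : ∀ x ∈ B, Lop ω u x ≤ ℓ / 2) :
    volume (subdiffU u B B) ≤ ENNReal.ofReal ((max ℓ 0 / κ) ^ d * B.card) := by
  have hc0 : 0 ≤ (max ℓ 0 / κ) ^ d := pow_nonneg (div_nonneg (le_max_right _ _) hκ.le) d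
  calc volume (subdiffU u B B)
      ≤ ∑ x ∈ B, volume (subdiff u B x) := measure_biUnion_finset_le B _
    _ ≤ ∑ _x ∈ B, ENNReal.ofReal ((max ℓ 0 / κ) ^ d) :=
        Finset.sum_le_sum fun x hx => subdiff_vol_bound ω hpos κ hκ hell B u ℓ hx (hsup x hx)
    _ = B.card • ENNReal.ofReal ((max ℓ 0 / κ) ^ d) := by rw [Finset.sum_const]
    _ = ENNReal.ofReal ((max ℓ 0 / κ) ^ d * B.card) := by
        rw [nsmul_eq_mul, ENNReal.ofReal_mul hc0, ENNReal.ofReal_natCast, mul_comm]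
end

section
/- Let u : B̄ → R with B ⊂ Z^d finite, and let ŭ : R^d → R be the convex envelope ŭ(x) = sup{ℓ(x) : ℓ affine, ℓ ≤ u on B̄}. Then for every x ∈ B: if u(x) = ŭ(x) then ∂ŭ(x;B) = ∂u(x;B), and if u(x) ≠ ŭ(x) then ∂ŭ(x;B) has Lebesgue measure zero. In particular |∂u(A;B)| = |∂ŭ(A;B)| for all A ⊂ B. -/
open MeasureTheory Finset
open scoped Classical

/-- The convex envelope `ŭ(x) = sup{ℓ(x) : ℓ affine, ℓ ≤ u on B̄}`, defined on all of `ℝ^d`. -/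
noncomputable def convEnv {d : ℕ} (u : (Fin d → ℤ) → ℝ) (B : Finset (Fin d → ℤ))
    (x : Fin d → ℝ) : ℝ :=
  sSup {t | ∃ a : Fin d → ℝ, ∃ b : ℝ,
    (∀ y ∈ latCl B, (∑ i, a i * (y i : ℝ)) + b ≤ u y) ∧ t = (∑ i, a i * x i) + b}

/-- Restriction of the convex envelope to lattice points. -/
noncomputable def convEnvZ {d : ℕ} (u : (Fin d → ℤ) → ℝ) (B : Finset (Fin d → ℤ)) :
    (Fin d → ℤ) → ℝ :=
  fun y => convEnv u B (fun i => (y i : ℝ))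

/-! A subgradient `p ∈ ∂u(x;B)` is an affine minorant of `u` touching it at `x`, so it lies
below `ŭ`, which forces `u x = ŭ x`; at contact points this makes the two subdifferentials
equal. At a non-contact point `x`, a subgradient `p` of `ŭ` gives an affine minorant of `u`
which must touch `u` at some lattice point `y ≠ x` (otherwise it could be raised, contradicting
the definition of `ŭ x`), so `p` lies on one of finitely many hyperplanes
`p · (x - y) = ŭ x - ŭ y`. -/

theorem LinearMap.addHaar_preimage_singleton {E : Type*} [NormedAddCommGroup E]
    [NormedSpace ℝ E] [MeasurableSpace E] [BorelSpace E] [FiniteDimensional ℝ E]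
    (μ : Measure E) [μ.IsAddHaarMeasure] {f : E →ₗ[ℝ] ℝ} (hf : f ≠ 0) (t : ℝ) :
    μ (f ⁻¹' {t}) = 0 := by
  obtain ⟨x, hx⟩ : ∃ x, f x ≠ 0 := by
    by_contra! h
    exact hf (LinearMap.ext h)
  set x₀ := (t / f x) • x
  have hfx₀ : f x₀ = t := by simp [x₀, div_mul_cancel₀ _ hx]
  have hlevel : f ⁻¹' {t} = AffineSubspace.mk' x₀ (LinearMap.ker f) := by
    ext p
    simp [AffineSubspace.mem_mk', sub_eq_zero, hfx₀]
  rw [hlevel]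
  refine Measure.addHaar_affineSubspace μ _ fun htop => hf ?_
  rw [← LinearMap.ker_eq_top, ← AffineSubspace.direction_mk' x₀ (LinearMap.ker f), htop,
    AffineSubspace.direction_top]

theorem volume_setOf_dotProduct_eq {ι : Type*} [Fintype ι] {w : ι → ℝ} (hw : w ≠ 0) (t : ℝ) :
    volume {p : ι → ℝ | w ⬝ᵥ p = t} = 0 :=
  LinearMap.addHaar_preimage_singleton volume
    ((dotProductEquiv ℝ ι).map_ne_zero_iff.mpr hw) t

theorem dotZ_sub_dotZ {d : ℕ} (p : Fin d → ℝ) (x y : Fin d → ℤ) :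
    dotZ p x - dotZ p y = (fun i => (x i - y i : ℝ)) ⬝ᵥ p := by
  simp only [dotZ, dotProduct, ← sum_sub_distrib, mul_sub, mul_comm]

section ConvexEnvelope

variable {d : ℕ} {u : (Fin d → ℤ) → ℝ} {B : Finset (Fin d → ℤ)} {x y : Fin d → ℤ}
  {p : Fin d → ℝ}

theorem mem_subdiff_iff :
    p ∈ subdiff u B x ↔ ∀ y ∈ latCl B, dotZ p y + (u x - dotZ p x) ≤ u y := by
  refine forall₂_congr fun y _ => ?_
  constructor <;> intro h <;> linarith

theorem convEnvZ_le (hy : y ∈ latCl B) : convEnvZ u B y ≤ u y := by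
  refine csSup_le ?_ ?_
  · obtain ⟨z, hz, hmin⟩ := (latCl B).exists_min_image u ⟨y, hy⟩
    exact ⟨u z, 0, u z, fun y hy => by simpa using hmin y hy, by simp⟩
  · rintro t ⟨a, b, hab, rfl⟩
    exact hab y hy

theorem le_convEnvZ (hy : y ∈ latCl B) {a : Fin d → ℝ} {b : ℝ}
    (hab : ∀ z ∈ latCl B, dotZ a z + b ≤ u z) : dotZ a y + b ≤ convEnvZ u B y :=
  le_csSup ⟨u y, by rintro t ⟨a', b', hab', rfl⟩; exact hab' y hy⟩ ⟨a, b, hab, rfl⟩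

theorem lt_convEnvZ (hy : y ∈ latCl B) {a : Fin d → ℝ} {b : ℝ}
    (hab : ∀ z ∈ latCl B, dotZ a z + b < u z) : dotZ a y + b < convEnvZ u B y := by
  obtain ⟨z₀, hz₀, hmin⟩ := (latCl B).exists_min_image (fun z => u z - (dotZ a z + b)) ⟨y, hy⟩
  have hgap : 0 < u z₀ - (dotZ a z₀ + b) := sub_pos.mpr (hab z₀ hz₀)
  have hraised := le_convEnvZ (u := u) hy (a := a) (b := b + (u z₀ - (dotZ a z₀ + b)))
    fun z hz => by linarith [hmin z hz]
  linarith

theorem convEnvZ_eq_of_mem_subdiff (hx : x ∈ latCl B) (hp : p ∈ subdiff u B x) :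
    convEnvZ u B x = u x := by
  have := le_convEnvZ hx (mem_subdiff_iff.mp hp)
  linarith [convEnvZ_le (u := u) hx]

theorem subdiff_eq_empty_of_ne_convEnvZ (hx : x ∈ latCl B) (h : u x ≠ convEnvZ u B x) :
    subdiff u B x = ∅ :=
  Set.eq_empty_of_forall_notMem fun _ hp => h (convEnvZ_eq_of_mem_subdiff hx hp).symm

theorem subdiff_convEnvZ_of_eq (h : u x = convEnvZ u B x) :
    subdiff (convEnvZ u B) B x = subdiff u B x := by
  ext p
  constructor
  · intro hp y hy
    linarith [hp y hy, convEnvZ_le (u := u) hy]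
  · intro hp y hy
    linarith [le_convEnvZ hy (mem_subdiff_iff.mp hp)]

theorem subdiff_convEnvZ_subset_hyperplanes (hx : x ∈ latCl B) (h : u x ≠ convEnvZ u B x) :
    subdiff (convEnvZ u B) B x ⊆ ⋃ y ∈ (latCl B).erase x,
      {p | dotZ p x - dotZ p y = convEnvZ u B x - convEnvZ u B y} := by
  intro p hp
  have hminorant := mem_subdiff_iff.mp hp
  obtain ⟨y, hy, hcontact⟩ : ∃ y ∈ latCl B, u y ≤ dotZ p y + (convEnvZ u B x - dotZ p x) := by
    by_contra! hlt
    linarith [lt_convEnvZ hx hlt]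
  have hvy : convEnvZ u B y = dotZ p y + (convEnvZ u B x - dotZ p x) :=
    le_antisymm (by linarith [convEnvZ_le (u := u) hy]) (hminorant y hy)
  have hyx : y ≠ x := by
    rintro rfl
    exact h (le_antisymm (by linarith) (convEnvZ_le hy))
  exact Set.mem_biUnion (mem_erase.mpr ⟨hyx, hy⟩) (by simp only [Set.mem_ofPred_eq]; linarith)

theorem volume_subdiff_convEnvZ_of_ne (hx : x ∈ latCl B) (h : u x ≠ convEnvZ u B x) :
    volume (subdiff (convEnvZ u B) B x) = 0 := by
  refine measure_mono_null (subdiff_convEnvZ_subset_hyperplanes hx h)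
    ((measure_biUnion_null_iff (Finset.countable_toSet _)).mpr fun y hy => ?_)
  have hxy : (fun i => (x i - y i : ℝ)) ≠ 0 := fun h0 =>
    (mem_erase.mp hy).1 (funext fun i => by exact_mod_cast (sub_eq_zero.mp (congrFun h0 i)).symm)
  simpa only [dotZ_sub_dotZ] using volume_setOf_dotProduct_eq hxy _

theorem subdiff_ae_eq_subdiff_convEnvZ (hx : x ∈ latCl B) :
    subdiff u B x =ᵐ[volume] subdiff (convEnvZ u B) B x := by
  by_cases h : u x = convEnvZ u B x
  · exact .of_eq (subdiff_convEnvZ_of_eq h).symm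
  · rw [subdiff_eq_empty_of_ne_convEnvZ hx h]
    exact (ae_eq_empty.mpr (volume_subdiff_convEnvZ_of_ne hx h)).symm

end ConvexEnvelope

theorem convex_envelope_subdiff_general (d : ℕ)
    (B : Finset (Fin d → ℤ)) (u : (Fin d → ℤ) → ℝ) :
    (∀ x ∈ B,
      (u x = convEnvZ u B x → subdiff (convEnvZ u B) B x = subdiff u B x) ∧
      (u x ≠ convEnvZ u B x → volume (subdiff (convEnvZ u B) B x) = 0)) ∧
    ∀ A : Finset (Fin d → ℤ), A ⊆ B →
      volume (subdiffU u A B) = volume (subdiffU (convEnvZ u B) A B) := by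
  refine ⟨fun x hx => ⟨subdiff_convEnvZ_of_eq, volume_subdiff_convEnvZ_of_ne (mem_union_left _ hx)⟩,
    fun A hAB => measure_congr ?_⟩
  exact ae_eq_set_biUnion A.countable_toSet fun x hx =>
    subdiff_ae_eq_subdiff_convEnvZ (mem_union_left _ (hAB hx))

/-- At contact points `u(x) = ŭ(x)` the subdifferentials of `u` and `ŭ` agree; at non-contact
points the subdifferential of `ŭ` is Lebesgue-null. In particular
`|∂u(A;B)| = |∂ŭ(A;B)|` for all `A ⊆ B`. -/
theorem convex_envelope_subdiff (d : ℕ) (hd : 0 < d)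
    (B : Finset (Fin d → ℤ)) (u : (Fin d → ℤ) → ℝ) :
    (∀ x ∈ B,
      (u x = convEnvZ u B x → subdiff (convEnvZ u B) B x = subdiff u B x) ∧
      (u x ≠ convEnvZ u B x → volume (subdiff (convEnvZ u B) B x) = 0)) ∧
    ∀ A : Finset (Fin d → ℤ), A ⊆ B →
      volume (subdiffU u A B) = volume (subdiffU (convEnvZ u B) A B) :=
  convex_envelope_subdiff_general d B u
end

section
/- For s ∈ R and triadic cubes Q_n = {x ∈ Z^d : |x|_∞ < 3^n/2}, define μ_n(s) = (#Q_n)^{-1} sup_{u ∈ S_n(s)} |∂u(Q_n)| where S_n(s) = {u : Q̄_n → R : L_ω u(x) ≤ s + ψ_ω(x) - E_Q[ψ] for all x ∈ Q_n}. Then for all m,n ∈ N, μ_{m+n} ≤ (#Q_n)^{-1} Σ_{i=1}^{#Q_n} μ_m^{(i)}, where {Q_m^i : 1 ≤ i ≤ #Q_n} are the disjoint m-level triadic sub-cubes of Q_{m+n} and μ_m^{(i)} = (#Q_m)^{-1} sup_{u ∈ S(s;Q_m^i)} |∂u(Q_m^i)|. -/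
open MeasureTheory Finset
open scoped Classical ENNReal

/-- The triadic cube `Q_n = {x ∈ ℤ^d : |x|_∞ < 3^n/2}`. -/
noncomputable def Qcube (d n : ℕ) : Finset (Fin d → ℤ) :=
  Finset.Icc (fun _ => -(((3 : ℤ) ^ n - 1) / 2)) (fun _ => ((3 : ℤ) ^ n - 1) / 2)

/-- The `m`-level triadic sub-cube of `Q_{m+n}` indexed by `z ∈ Q_n`: `3^m z + Q_m`. -/
noncomputable def subQ (d m : ℕ) (z : Fin d → ℤ) : Finset (Fin d → ℤ) :=
  (Qcube d m).image (fun x => fun i => (3 : ℤ) ^ m * z i + x i)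

/-- `u` is a supersolution: `L_ω u ≤ s + ψ_ω - E_Q ψ` on `Q`. -/
def inSuper {d : ℕ} (ω : (Fin d → ℤ) → Fin d → ℝ) (ψ : (Fin d → ℤ) → ℝ) (Eψ s : ℝ)
    (Q : Finset (Fin d → ℤ)) (u : (Fin d → ℤ) → ℝ) : Prop :=
  ∀ x ∈ Q, Lop ω u x ≤ s + ψ x - Eψ

/-- `μ(s;Q) = (#Q)⁻¹ sup_{u ∈ S(s;Q)} |∂u(Q)|`. -/
noncomputable def muQ {d : ℕ} (ω : (Fin d → ℤ) → Fin d → ℝ) (ψ : (Fin d → ℤ) → ℝ)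
    (Eψ s : ℝ) (Q : Finset (Fin d → ℤ)) : ℝ≥0∞ :=
  (⨆ (u : (Fin d → ℤ) → ℝ) (_ : inSuper ω ψ Eψ s Q u), volume (subdiffU u Q Q)) /
    (Q.card : ℝ≥0∞)

/-! Balanced ternary expansion tiles `Q_{m+n}` by the sub-cubes `3^m z + Q_m`, `z ∈ Q_n`.
Shrinking the domain only enlarges subdifferentials and weakens the supersolution constraint, so
for `u ∈ S(s;Q_{m+n})` the set `∂u(Q_{m+n})` is covered by the sets `∂u(Q_m^i)` of the
restrictions of `u` to the sub-cubes, each of measure at most `sup_{S(s;Q_m^i)} |∂v(Q_m^i)|`.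
Taking the supremum and dividing by `#Q_{m+n} = #Q_m · #Q_n` gives the inequality. -/

lemma latCl_mono {d : ℕ} {A B : Finset (Fin d → ℤ)} (h : A ⊆ B) : latCl A ⊆ latCl B := by
  intro y hy
  simp only [latCl, latBd, mem_union, mem_sdiff, mem_biUnion] at hy ⊢
  by_cases hyB : y ∈ B
  · exact Or.inl hyB
  · rcases hy with hy | ⟨⟨x, hx, hxy⟩, -⟩
    · exact absurd (h hy) hyB
    · exact Or.inr ⟨⟨x, h hx, hxy⟩, hyB⟩

lemma subdiff_anti {d : ℕ} (u : (Fin d → ℤ) → ℝ) {A B : Finset (Fin d → ℤ)} (h : A ⊆ B)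
    (x : Fin d → ℤ) : subdiff u B x ⊆ subdiff u A x :=
  fun _ hp y hy => hp y (latCl_mono h hy)

lemma subdiffU_subset_biUnion {d : ℕ} {ι : Type*} (u : (Fin d → ℤ) → ℝ) (I : Finset ι)
    (Q : ι → Finset (Fin d → ℤ)) :
    subdiffU u (I.biUnion Q) (I.biUnion Q) ⊆ ⋃ i ∈ I, subdiffU u (Q i) (Q i) := by
  intro p hp
  simp only [subdiffU, Set.mem_iUnion, exists_prop, mem_biUnion] at hp ⊢
  obtain ⟨x, ⟨i, hi, hx⟩, hpx⟩ := hp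
  exact ⟨i, hi, x, hx, subdiff_anti u (subset_biUnion_of_mem Q hi) x hpx⟩

lemma inSuper.mono {d : ℕ} {ω : (Fin d → ℤ) → Fin d → ℝ} {ψ : (Fin d → ℤ) → ℝ} {Eψ s : ℝ}
    {A B : Finset (Fin d → ℤ)} {u : (Fin d → ℤ) → ℝ} (hu : inSuper ω ψ Eψ s B u) (h : A ⊆ B) :
    inSuper ω ψ Eψ s A u :=
  fun x hx => hu x (h hx)

section SupSubdiffVol

variable {d : ℕ} (ω : (Fin d → ℤ) → Fin d → ℝ) (ψ : (Fin d → ℤ) → ℝ) (Eψ s : ℝ)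

/-- `sup_{u ∈ S(s;Q)} |∂u(Q)|`, so that `μ(s;Q) = supSubdiffVol Q / #Q`. -/
noncomputable def supSubdiffVol (Q : Finset (Fin d → ℤ)) : ℝ≥0∞ :=
  ⨆ (u : (Fin d → ℤ) → ℝ) (_ : inSuper ω ψ Eψ s Q u), volume (subdiffU u Q Q)

lemma muQ_eq_supSubdiffVol_div (Q : Finset (Fin d → ℤ)) :
    muQ ω ψ Eψ s Q = supSubdiffVol ω ψ Eψ s Q / Q.card := rfl

lemma le_supSubdiffVol {Q : Finset (Fin d → ℤ)} {u : (Fin d → ℤ) → ℝ}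
    (hu : inSuper ω ψ Eψ s Q u) : volume (subdiffU u Q Q) ≤ supSubdiffVol ω ψ Eψ s Q :=
  le_iSup₂ (f := fun v (_ : inSuper ω ψ Eψ s Q v) => volume (subdiffU v Q Q)) u hu

theorem supSubdiffVol_biUnion_le {ι : Type*} (I : Finset ι) (Q : ι → Finset (Fin d → ℤ)) :
    supSubdiffVol ω ψ Eψ s (I.biUnion Q) ≤ ∑ i ∈ I, supSubdiffVol ω ψ Eψ s (Q i) := by
  refine iSup₂_le fun u hu => ?_
  calc volume (subdiffU u (I.biUnion Q) (I.biUnion Q))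
      ≤ volume (⋃ i ∈ I, subdiffU u (Q i) (Q i)) := measure_mono (subdiffU_subset_biUnion u I Q)
    _ ≤ ∑ i ∈ I, volume (subdiffU u (Q i) (Q i)) := measure_biUnion_finset_le _ _
    _ ≤ ∑ i ∈ I, supSubdiffVol ω ψ Eψ s (Q i) :=
        sum_le_sum fun i hi => le_supSubdiffVol ω ψ Eψ s (hu.mono (subset_biUnion_of_mem Q hi))

end SupSubdiffVol

lemma three_pow_eq_two_mul_add_one (n : ℕ) : (3 : ℤ) ^ n = 2 * (((3 : ℤ) ^ n - 1) / 2) + 1 := by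
  obtain ⟨k, hk⟩ : Odd ((3 : ℤ) ^ n) := Odd.pow ⟨1, by norm_num⟩
  omega

lemma three_pow_add_sub_one_div_two (m n : ℕ) :
    ((3 : ℤ) ^ (m + n) - 1) / 2 = 3 ^ m * (((3 : ℤ) ^ n - 1) / 2) + ((3 : ℤ) ^ m - 1) / 2 := by
  have hm := three_pow_eq_two_mul_add_one m
  have hn := three_pow_eq_two_mul_add_one n
  have h : (3 : ℤ) ^ (m + n) - 1 =
      2 * (3 ^ m * (((3 : ℤ) ^ n - 1) / 2) + ((3 : ℤ) ^ m - 1) / 2) := by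
    rw [pow_add]; linear_combination 3 ^ m * hn + hm
  rw [h, Int.mul_ediv_cancel_left _ two_ne_zero]

lemma mem_Qcube {d n : ℕ} {x : Fin d → ℤ} :
    x ∈ Qcube d n ↔ ∀ i, |x i| ≤ ((3 : ℤ) ^ n - 1) / 2 := by
  simp only [Qcube, mem_Icc, Pi.le_def, abs_le, forall_and]

lemma exists_balanced_div_mod {h k x : ℤ} (hh : 0 ≤ h) (hx : |x| ≤ (2 * h + 1) * k + h) :
    ∃ z r, |z| ≤ k ∧ |r| ≤ h ∧ (2 * h + 1) * z + r = x := by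
  have hb : 0 < 2 * h + 1 := by omega
  have hdiv := Int.mul_ediv_add_emod (x + h) (2 * h + 1)
  have hmod := Int.emod_nonneg (x + h) hb.ne'
  have hmod' := Int.emod_lt_of_pos (x + h) hb
  refine ⟨(x + h) / (2 * h + 1), (x + h) % (2 * h + 1) - h,
    abs_le.2 ⟨?_, ?_⟩, abs_le.2 ⟨?_, ?_⟩, ?_⟩
  · rw [Int.le_ediv_iff_mul_le hb]; nlinarith [abs_le.1 hx]
  · rw [← Int.lt_add_one_iff, Int.ediv_lt_iff_lt_mul hb]; nlinarith [abs_le.1 hx]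
  all_goals linarith

lemma Qcube_add_eq_biUnion_subQ (d m n : ℕ) :
    Qcube d (m + n) = (Qcube d n).biUnion (subQ d m) := by
  ext x
  simp only [mem_biUnion, subQ, mem_image, mem_Qcube, three_pow_add_sub_one_div_two]
  constructor
  · intro hx
    have hh : 0 ≤ ((3 : ℤ) ^ m - 1) / 2 := by
      have := pow_pos (three_pos : (0 : ℤ) < 3) m; omega
    choose z r hz hr hzr using fun i =>
      exists_balanced_div_mod (x := x i) hh (by rw [← three_pow_eq_two_mul_add_one]; exact hx i)
    exact ⟨z, hz, r, hr, funext fun i => by rw [← hzr i, ← three_pow_eq_two_mul_add_one]⟩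
  · rintro ⟨z, hz, r, hr, rfl⟩ i
    calc |3 ^ m * z i + r i| ≤ 3 ^ m * |z i| + |r i| := by
          simpa [abs_mul] using abs_add_le (3 ^ m * z i) (r i)
      _ ≤ _ := by gcongr; exacts [hz i, hr i]

lemma card_Qcube (d n : ℕ) : #(Qcube d n) = (3 ^ n) ^ d := by
  have hwidth : ((3 : ℤ) ^ n - 1) / 2 + 1 - -(((3 : ℤ) ^ n - 1) / 2) = ((3 ^ n : ℕ) : ℤ) := by
    push_cast; linarith [three_pow_eq_two_mul_add_one n]
  simp only [Qcube, Pi.card_Icc, Int.card_Icc, hwidth, Int.toNat_natCast, prod_const, card_univ,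
    Fintype.card_fin]

lemma card_subQ (d m : ℕ) (z : Fin d → ℤ) : #(subQ d m z) = #(Qcube d m) :=
  card_image_of_injective _ fun a b hab => funext fun i => by simpa using congrFun hab i

theorem mu_subadditive_general (d : ℕ)
    (ω : (Fin d → ℤ) → Fin d → ℝ)
    (ψ : (Fin d → ℤ) → ℝ) (Eψ s : ℝ) (m n : ℕ) :
    muQ ω ψ Eψ s (Qcube d (m + n)) ≤
      (∑ z ∈ Qcube d n, muQ ω ψ Eψ s (subQ d m z)) / ((Qcube d n).card : ℝ≥0∞) := by
  set V := supSubdiffVol ω ψ Eψ s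
  have hcard : (#(Qcube d (m + n)) : ℝ≥0∞) = #(Qcube d m) * #(Qcube d n) := by
    rw [card_Qcube, card_Qcube, card_Qcube, pow_add, mul_pow]; push_cast; rfl
  calc muQ ω ψ Eψ s (Qcube d (m + n))
      = V (Qcube d (m + n)) / (#(Qcube d m) * #(Qcube d n)) := by
        rw [muQ_eq_supSubdiffVol_div, hcard]
    _ ≤ (∑ z ∈ Qcube d n, V (subQ d m z)) / (#(Qcube d m) * #(Qcube d n)) := by
        gcongr
        rw [Qcube_add_eq_biUnion_subQ]
        exact supSubdiffVol_biUnion_le ω ψ Eψ s _ _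
    _ = (∑ z ∈ Qcube d n, V (subQ d m z) / #(Qcube d m)) / #(Qcube d n) := by
        simp only [div_eq_mul_inv, ← sum_mul, mul_assoc,
          ENNReal.mul_inv (Or.inr (ENNReal.natCast_ne_top _)) (Or.inl (ENNReal.natCast_ne_top _))]
    _ = _ := by simp only [muQ_eq_supSubdiffVol_div, card_subQ, V]

/-- Subadditivity across scales:
`μ(s;Q_{m+n}) ≤ (#Q_n)⁻¹ ∑_{z ∈ Q_n} μ(s; 3^m z + Q_m)`. -/
theorem mu_subadditive (d : ℕ) (hd : 0 < d)
    (ω : (Fin d → ℤ) → Fin d → ℝ) (hpos : ∀ x i, 0 < ω x i)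
    (κ : ℝ) (hκ : 0 < κ) (hell : ∀ x i, κ ≤ ω x i / (2 * trw ω x))
    (ψ : (Fin d → ℤ) → ℝ) (Eψ s : ℝ) (m n : ℕ) :
    muQ ω ψ Eψ s (Qcube d (m + n)) ≤
      (∑ z ∈ Qcube d n, muQ ω ψ Eψ s (subQ d m z)) / ((Qcube d n).card : ℝ≥0∞) :=
  mu_subadditive_general d ω ψ Eψ s m n
end

section
/- Let C₁, c₂ > 0 and suppose for every n ∈ N a nonnegative random variable μ_n is bounded by a constant, satisfies E[μ_n] ≤ C₁ 3^{-c₂ n}, and for n = n₁ + n₂ satisfies μ_n ≤ (1/#Q_{n₂}) Σ_{i=1}^{#Q_{n₂}} μ_{n₁}^{(i)} with {μ_{n₁}^{(i)}} i.i.d. copies of μ_{n₁}, bounded by a constant K, where #Q_{n₂} = 3^{n₂ d}. Then for any p ∈ (0,d) there is α > 0 (depending on d, c₂, p, K) such that for all t ≥ 1 and n ∈ N, P(μ_n ≥ C₁ 3^{-αn} t) ≤ exp(-c (t-1)² 3^{np}). -/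
/-!
Split `n = n₁ + n₂` with `n₁ = ⌈θ n⌉`. Then `μ_n` is dominated by the average of `N = 3^{n₂ d}`
independent copies of `μ_{n₁}`, each with values in `[0, K]` and mean at most `C₁ 3^{-c₂ θ n}`.
Hoeffding's inequality bounds the probability that this average exceeds its mean bound by
`s = C₁ 3^{-c₂ θ n} (t - 1)` by `exp(-2 N s² / K²)`, and `θ` is chosen so that
`N 3^{-2 c₂ θ n} ≥ 3^{p n - d}`, i.e. `(1 - θ) d - 2 c₂ θ = p`.
-/

open MeasureTheory ProbabilityTheory Real

section Hoeffding

variable {Ω ι : Type*} [MeasurableSpace Ω] {μ : Measure Ω} [IsProbabilityMeasure μ] [Fintype ι]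
  [Nonempty ι] {X : ι → Ω → ℝ}

lemma measureReal_average_ge_le_of_mem_Icc (hindep : iIndepFun X μ)
    (hmeas : ∀ i, AEMeasurable (X i) μ) {a b : ℝ} (hbdd : ∀ i, ∀ᵐ ω ∂μ, X i ω ∈ Set.Icc a b)
    {m s : ℝ} (hmean : ∀ i, μ[X i] ≤ m) (hs : 0 ≤ s) :
    μ.real {ω | m + s ≤ (∑ i, X i ω) / Fintype.card ι} ≤
      exp (-2 * Fintype.card ι * s ^ 2 / (b - a) ^ 2) := by
  set N : ℝ := (Fintype.card ι : ℝ) with hN_def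
  have hN : 0 < N := by positivity
  have hcentered : iIndepFun (fun i ω ↦ X i ω - μ[X i]) μ :=
    hindep.comp (fun i y ↦ y - integral μ (X i)) fun _ ↦ measurable_sub_const _
  have hoeffding := HasSubgaussianMGF.measure_sum_ge_le_of_iIndepFun hcentered (s := Finset.univ)
    (fun i _ ↦ hasSubgaussianMGF_of_mem_Icc (hmeas i) (hbdd i)) (ε := N * s) (by positivity)
  have hsubset : {ω | m + s ≤ (∑ i, X i ω) / N} ⊆ {ω | N * s ≤ ∑ i, (X i ω - μ[X i])} := by
    intro ω hω
    have hsum_mean : ∑ i, μ[X i] ≤ N * m := by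
      simpa [N] using Finset.sum_le_sum fun i (_ : i ∈ Finset.univ) ↦ hmean i
    simp only [Set.mem_ofPred_eq, Finset.sum_sub_distrib, le_div_iff₀ hN] at hω ⊢
    linarith
  refine (measureReal_mono hsubset).trans (hoeffding.trans_eq ?_)
  rcases eq_or_ne (b - a) 0 with hab | hab
  · simp [hab]
  · simp only [Finset.sum_const, Finset.card_univ, nsmul_eq_mul, NNReal.coe_mul,
      NNReal.coe_natCast, NNReal.coe_pow, NNReal.coe_div, coe_nnnorm, Real.norm_eq_abs,
      NNReal.coe_ofNat, div_pow, sq_abs, ← hN_def]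
    field_simp

lemma measure_ge_le_of_ae_le_average (hindep : iIndepFun X μ)
    (hmeas : ∀ i, AEMeasurable (X i) μ) {a b : ℝ} (hbdd : ∀ i, ∀ᵐ ω ∂μ, X i ω ∈ Set.Icc a b)
    {m s : ℝ} (hmean : ∀ i, μ[X i] ≤ m) (hs : 0 ≤ s) {F : Ω → ℝ}
    (hF : ∀ᵐ ω ∂μ, F ω ≤ (∑ i, X i ω) / Fintype.card ι) :
    μ {ω | m + s ≤ F ω} ≤ ENNReal.ofReal (exp (-2 * Fintype.card ι * s ^ 2 / (b - a) ^ 2)) := by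
  calc μ {ω | m + s ≤ F ω}
      ≤ μ {ω | m + s ≤ (∑ i, X i ω) / Fintype.card ι} := by
        refine measure_mono_ae ?_
        filter_upwards [hF] with ω hFω (hω : m + s ≤ F ω)
        exact hω.trans hFω
    _ ≤ _ := by
        rw [← ofReal_measureReal]
        exact ENNReal.ofReal_le_ofReal
          (measureReal_average_ge_le_of_mem_Icc hindep hmeas hbdd hmean hs)

end Hoeffding

lemma exists_mul_sub_mul_eq {d c p : ℝ} (hc : 0 < c) (hp : 0 < p) (hpd : p < d) :
    ∃ θ : ℝ, 0 < θ ∧ θ ≤ 1 ∧ (1 - θ) * d - 2 * c * θ = p := by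
  have hden : 0 < d + 2 * c := by linarith
  refine ⟨(d - p) / (d + 2 * c), div_pos (by linarith) hden,
    (div_le_one hden).2 (by linarith), ?_⟩
  field_simp
  ring

lemma rpow_mul_rpow_neg_le_pow_mul {β : ℝ} (hβ : 1 ≤ β) {d n₁ n₂ : ℕ} {θ c p : ℝ}
    (hp : (1 - θ) * d - 2 * c * θ = p) (hn₁ : (n₁ : ℝ) ≤ θ * (n₁ + n₂ : ℕ) + 1) :
    β ^ (p * (n₁ + n₂ : ℕ)) * β ^ (-(d : ℝ)) ≤
      β ^ (n₂ * d) * (β ^ (-(c * θ * (n₁ + n₂ : ℕ)))) ^ 2 := by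
  have hβ0 : 0 < β := by linarith
  rw [← rpow_natCast β (n₂ * d), ← rpow_natCast _ 2, ← rpow_mul hβ0.le, ← rpow_add hβ0,
    ← rpow_add hβ0]
  refine rpow_le_rpow_of_exponent_le hβ ?_
  push_cast at hn₁ ⊢
  have hd : (0 : ℝ) ≤ d := d.cast_nonneg
  nlinarith

theorem mu_concentration_general {Ωs : Type*} [MeasurableSpace Ωs]
    (μ : Measure Ωs) [IsProbabilityMeasure μ]
    (d : ℕ) (C₁ c₂ K : ℝ) (hC₁ : 0 < C₁) (hc₂ : 0 < c₂) (hK : 0 < K)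
    (f : ℕ → Ωs → ℝ)
    (hmean : ∀ n : ℕ, ∫ a, f n a ∂μ ≤ C₁ * (3 : ℝ) ^ (-(c₂ * (n : ℝ))))
    (hsub : ∀ n₁ n₂ : ℕ, ∃ g : Fin (3 ^ (n₂ * d)) → Ωs → ℝ,
      (∀ i, Measurable (g i)) ∧
      iIndepFun g μ ∧
      (∀ i, IdentDistrib (g i) (f n₁) μ μ) ∧
      (∀ i, ∀ᵐ a ∂μ, 0 ≤ g i a ∧ g i a ≤ K) ∧
      (∀ᵐ a ∂μ, f (n₁ + n₂) a ≤ (∑ i, g i a) / ((3 : ℝ) ^ (n₂ * d)))) :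
    ∀ p : ℝ, 0 < p → p < d →
      ∃ α : ℝ, 0 < α ∧ ∃ c : ℝ, 0 < c ∧ ∀ t : ℝ, 1 ≤ t → ∀ n : ℕ,
        μ {a | C₁ * (3 : ℝ) ^ (-(α * (n : ℝ))) * t ≤ f n a} ≤
          ENNReal.ofReal (Real.exp (-c * (t - 1) ^ 2 * (3 : ℝ) ^ (p * (n : ℝ)))) := by
  intro p hp hpd
  obtain ⟨θ, hθ0, hθ1, hθp⟩ := exists_mul_sub_mul_eq hc₂ hp hpd
  refine ⟨c₂ * θ, by positivity, 2 * C₁ ^ 2 * 3 ^ (-(d : ℝ)) / K ^ 2, by positivity,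
    fun t ht n ↦ ?_⟩
  have hθn : 0 ≤ θ * n := by positivity
  set n₁ := ⌈θ * n⌉₊
  obtain ⟨n₂, hn⟩ := Nat.exists_eq_add_of_le (Nat.ceil_le.2 (by nlinarith : θ * n ≤ n))
  obtain ⟨g, hgmeas, hgindep, hgid, hgbdd, hgle⟩ := hsub n₁ n₂
  set B := C₁ * (3 : ℝ) ^ (-(c₂ * θ * n)) with hB
  have hmean_g (i : Fin (3 ^ (n₂ * d))) : μ[g i] ≤ B := by
    rw [(hgid i).integral_eq]
    refine (hmean n₁).trans (mul_le_mul_of_nonneg_left (rpow_le_rpow_of_exponent_le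
      (by norm_num) ?_) hC₁.le)
    nlinarith [Nat.le_ceil (θ * n)]
  have hexponent := rpow_mul_rpow_neg_le_pow_mul (β := 3) (by norm_num) hθp
    (n₁ := n₁) (n₂ := n₂) (by rw [← hn]; exact (Nat.ceil_lt_add_one hθn).le)
  rw [← hn] at hexponent
  have hoeffding := measure_ge_le_of_ae_le_average hgindep (fun i ↦ (hgmeas i).aemeasurable)
    hgbdd hmean_g (s := B * (t - 1)) (mul_nonneg (by positivity) (by linarith)) (F := f n)
    (by rw [hn]; simpa using hgle)
  rw [show B + B * (t - 1) = B * t by ring, Fintype.card_fin, Nat.cast_pow, Nat.cast_ofNat,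
    sub_zero] at hoeffding
  refine hoeffding.trans (ENNReal.ofReal_le_ofReal (exp_le_exp.2 ?_))
  calc _ = -(2 * C₁ ^ 2 * (t - 1) ^ 2 / K ^ 2 *
        (3 ^ (n₂ * d) * ((3 : ℝ) ^ (-(c₂ * θ * n))) ^ 2)) := by rw [hB]; ring
    _ ≤ -(2 * C₁ ^ 2 * (t - 1) ^ 2 / K ^ 2 * (3 ^ (p * n) * 3 ^ (-(d : ℝ)))) := by gcongr
    _ = _ := by ring

/-- Concentration from bounded i.i.d. subadditive averages and exponential decay of means:
if `E[μ_n] ≤ C₁ 3^{-c₂ n}` and `μ_{n₁+n₂}` is dominated by the average of `3^{n₂ d}` i.i.d.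
copies of `μ_{n₁}`, then for any `p ∈ (0,d)` there is `α > 0` with
`P(μ_n ≥ C₁ 3^{-αn} t) ≤ exp(-c (t-1)² 3^{np})` for all `t ≥ 1`. -/
theorem mu_concentration {Ωs : Type*} [MeasurableSpace Ωs]
    (μ : Measure Ωs) [IsProbabilityMeasure μ]
    (d : ℕ) (hd : 0 < d) (C₁ c₂ K : ℝ) (hC₁ : 0 < C₁) (hc₂ : 0 < c₂) (hK : 0 < K)
    (f : ℕ → Ωs → ℝ) (hmeas : ∀ n, Measurable (f n))
    (hbdd : ∀ n, ∀ᵐ a ∂μ, 0 ≤ f n a ∧ f n a ≤ K)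
    (hmean : ∀ n : ℕ, ∫ a, f n a ∂μ ≤ C₁ * (3 : ℝ) ^ (-(c₂ * (n : ℝ))))
    (hsub : ∀ n₁ n₂ : ℕ, ∃ g : Fin (3 ^ (n₂ * d)) → Ωs → ℝ,
      (∀ i, Measurable (g i)) ∧
      iIndepFun g μ ∧
      (∀ i, IdentDistrib (g i) (f n₁) μ μ) ∧
      (∀ i, ∀ᵐ a ∂μ, 0 ≤ g i a ∧ g i a ≤ K) ∧
      (∀ᵐ a ∂μ, f (n₁ + n₂) a ≤ (∑ i, g i a) / ((3 : ℝ) ^ (n₂ * d)))) :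
    ∀ p : ℝ, 0 < p → p < d →
      ∃ α : ℝ, 0 < α ∧ ∃ c : ℝ, 0 < c ∧ ∀ t : ℝ, 1 ≤ t → ∀ n : ℕ,
        μ {a | C₁ * (3 : ℝ) ^ (-(α * (n : ℝ))) * t ≤ f n a} ≤
          ENNReal.ofReal (Real.exp (-c * (t - 1) ^ 2 * (3 : ℝ) ^ (p * (n : ℝ)))) :=
  mu_concentration_general μ d C₁ c₂ K hC₁ hc₂ hK f hmean hsub
end
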